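/- Let s ∈ ℝ with s ≠ 0, let k ≥ 1 be an integer, and let w_1,…,w_k ∈ [0,1). Set ν_j := √(cosh²(2s) − sinh²(2s)·w_j) and h(ν) := ((ν+1)/2)·log((ν+1)/2) − ((ν−1)/2)·log((ν−1)/2). Then Σ_{j=1}^k h(ν_j) = k·[(1/2)·log(sinh²(2s)/4) + cosh(2s)·artanh(sech(2s))] + Σ_{i=1}^∞ [(1/3)·sech²(2s)·tanh^{2i}(2s)·₂F₁(3/2, 1+i; 5/2; sech²(2s)) − 1/(2i)]·(Σ_{j=1}^k w_j^i), where the series on the right converges absolutely. -/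

import Mathlib

open scoped BigOperators Topology ENNReal
open MeasureTheory Filter Real Matrix

noncomputable section

/-- Rising factorial `(x)_t = x (x+1) ⋯ (x+t−1)`. -/
def rf (x : ℝ) (t : ℕ) : ℝ := ∏ j ∈ Finset.range t, (x + j)

/-- The `i`-th Catalan number `C_i = (1/(i+1))·binom(2i,i)` as a real number. -/
def catR (i : ℕ) : ℝ := (Nat.choose (2 * i) i : ℝ) / (i + 1)


/-- Gauss hypergeometric series `₂F₁(3/2, 1+i; 5/2; x)`. -/
def hyp2F1 (i : ℕ) (x : ℝ) : ℝ :=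
  ∑' j : ℕ, (rf (3 / 2) j * rf (1 + i) j / (rf (5 / 2) j * (Nat.factorial j))) * x ^ j

/-- The inverse hyperbolic tangent, `artanh x = (1/2)·log((1+x)/(1−x))`. -/
def artanh (x : ℝ) : ℝ := Real.log ((1 + x) / (1 - x)) / 2

lemma rf_succ (x : ℝ) (n : ℕ) : rf x (n + 1) = rf x n * (x + n) :=
  Finset.prod_range_succ _ _

lemma rf_succ' (x : ℝ) (n : ℕ) : rf x (n + 1) = x * rf (x + 1) n := by
  unfold rf
  rw [Finset.prod_range_succ']
  have : ∀ i : ℕ, x + (↑(i + 1) : ℝ) = (x + 1) + i := by intro i; push_cast; ring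
  simp only [this, Nat.cast_zero, add_zero]
  ring

lemma rf_pos {x : ℝ} (hx : 0 < x) (n : ℕ) : 0 < rf x n :=
  Finset.prod_pos fun j _ => by positivity

lemma rf_three_halves (m : ℕ) : rf (3 / 2) m * (2 * m + 3) = 3 * rf (5 / 2) m := by
  have h1 : rf (3 / 2) (m + 1) = rf (3 / 2) m * (3 / 2 + m) := rf_succ _ _
  have h2 : rf (3 / 2) (m + 1) = (3 / 2) * rf (5 / 2) m := by
    rw [rf_succ']; norm_num
  linear_combination 2 * (h1.symm.trans h2)

lemma rf_nat (n m : ℕ) : rf (1 + (n : ℝ)) m = (Nat.choose (n + m) m : ℝ) * m.factorial := by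
  induction m with
  | zero => simp [rf]
  | succ m ih =>
    rw [rf_succ, ih]
    have key : ((n + m + 1 : ℕ) : ℝ) * (Nat.choose (n + m) m : ℝ)
        = (Nat.choose (n + m + 1) (m + 1) : ℝ) * ((m : ℝ) + 1) := by
      have := Nat.add_one_mul_choose_eq (n + m) m
      have h2 := congrArg (fun z : ℕ => (z : ℝ)) this
      push_cast at h2
      push_cast
      linarith [h2]
    rw [show n + (m + 1) = n + m + 1 from rfl, Nat.factorial_succ]
    push_cast
    push_cast at key
    nlinarith [key, Nat.factorial_pos m]

lemma hyp_term (i m : ℕ) :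
    rf (3 / 2) m * rf (1 + ((i + 1 : ℕ) : ℝ)) m / (rf (5 / 2) m * (Nat.factorial m : ℝ))
      = 3 * (Nat.choose (m + 1 + i) m : ℝ) / (2 * m + 3) := by
  rw [rf_nat (i + 1) m, show (i + 1) + m = m + 1 + i from by omega]
  have h5 : (0 : ℝ) < rf (5 / 2) m := rf_pos (by norm_num) m
  have hf : (0 : ℝ) < (Nat.factorial m : ℝ) := by exact_mod_cast m.factorial_pos
  have hd : (0 : ℝ) < 2 * (m : ℝ) + 3 := by positivity
  rw [div_eq_div_iff (ne_of_gt (mul_pos h5 hf)) (ne_of_gt hd)]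
  linear_combination (Nat.choose (m + 1 + i) m : ℝ) * (Nat.factorial m : ℝ) * rf_three_halves m

lemma hyp_eq_P (i : ℕ) (x t : ℝ) :
    1 / 3 * x * t ^ (i + 1) * hyp2F1 (i + 1) x
      = ∑' m : ℕ, (Nat.choose (m + 1 + i) m : ℝ) * x ^ (m + 1) * t ^ (i + 1) / (2 * m + 3) := by
  unfold hyp2F1
  rw [← tsum_mul_left]
  refine tsum_congr fun m => ?_
  rw [hyp_term i m]
  have hd : (0 : ℝ) < 2 * (m : ℝ) + 3 := by positivity
  field_simp
  ring

lemma hasSum_shift {f : ℕ → ℝ} {S : ℝ} (h : HasSum f S) :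
    HasSum (fun n => f (n + 1)) (S - f 0) := by
  have : S - f 0 = S - ∑ i ∈ Finset.range 1, f i := by simp
  rw [this]
  exact (hasSum_nat_add_iff' (f := f) 1).2 h

lemma hasSum_mul_artanh {ν : ℝ} (hν : 1 < ν) :
    HasSum (fun m : ℕ => (1 / ν ^ 2) ^ m / (2 * m + 1)) (ν * _root_.artanh (1 / ν)) := by
  have hν0 : (0 : ℝ) < ν := lt_trans one_pos hν
  have hy : |1 / ν| < 1 := by
    rw [abs_of_pos (by positivity)]
    rw [div_lt_one hν0]; exact hν
  have H := (hasSum_log_sub_log_of_abs_lt_one hy).mul_left (ν / 2)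
  have hval : ν / 2 * (Real.log (1 + 1 / ν) - Real.log (1 - 1 / ν)) = ν * _root_.artanh (1 / ν) := by
    unfold _root_.artanh
    rw [Real.log_div (by positivity) (by
      have : 1 / ν < 1 := by rw [div_lt_one hν0]; exact hν
      linarith)]
    ring
  rw [hval] at H
  refine H.congr_fun fun m => ?_
  have hne : ν ≠ 0 := ne_of_gt hν0
  have : (1 / ν) ^ (2 * m + 1) = (1 / ν ^ 2) ^ m * (1 / ν) := by
    rw [pow_succ, pow_mul]
    congr 1
    rw [div_pow, one_pow]
  rw [this]
  field_simp

set_option maxHeartbeats 1600000 in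
lemma key_hasSum {c w : ℝ} (hc : 1 < c) (hw0 : 0 ≤ w) (hw1 : w < 1) :
    HasSum
      (fun i : ℕ =>
        (1 / 3 * (1 / c) ^ 2 * (1 - (1 / c) ^ 2) ^ (i + 1) * hyp2F1 (i + 1) ((1 / c) ^ 2) -
            1 / (2 * ((i : ℝ) + 1))) * w ^ (i + 1))
      ((((Real.sqrt (c ^ 2 - (c ^ 2 - 1) * w) + 1) / 2) *
            Real.log ((Real.sqrt (c ^ 2 - (c ^ 2 - 1) * w) + 1) / 2) -
          ((Real.sqrt (c ^ 2 - (c ^ 2 - 1) * w) - 1) / 2) *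
            Real.log ((Real.sqrt (c ^ 2 - (c ^ 2 - 1) * w) - 1) / 2)) -
        (1 / 2 * Real.log ((c ^ 2 - 1) / 4) + c * _root_.artanh (1 / c)))
    ∧ Summable (fun i : ℕ =>
        |(1 / 3 * (1 / c) ^ 2 * (1 - (1 / c) ^ 2) ^ (i + 1) * hyp2F1 (i + 1) ((1 / c) ^ 2) -
            1 / (2 * ((i : ℝ) + 1))) * w ^ (i + 1)|) := by
  have hc0 : (0 : ℝ) < c := lt_trans one_pos hc
  set x : ℝ := (1 / c) ^ 2 with hxdef
  have hx_eq : x = 1 / c ^ 2 := by rw [hxdef, div_pow, one_pow]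
  have hx0 : 0 < x := by rw [hx_eq]; positivity
  have hx1 : x < 1 := by
    rw [hx_eq, div_lt_one (by positivity)]; nlinarith
  set t : ℝ := 1 - x with htdef
  have ht0 : 0 < t := by rw [htdef]; linarith
  have ht1 : t < 1 := by rw [htdef]; linarith
  set u : ℝ := t * w with hudef
  have hu0 : 0 ≤ u := mul_nonneg ht0.le hw0
  have hut : u < t := by
    rw [hudef]; exact mul_lt_of_lt_one_right ht0 hw1
  have hu1 : u < 1 := lt_trans hut ht1
  have h1u : 0 < 1 - u := by linarith
  have hx1u : x < 1 - u := by rw [htdef] at hut; linarith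
  set ν := Real.sqrt (c ^ 2 - (c ^ 2 - 1) * w) with hνdef
  have harg : c ^ 2 - (c ^ 2 - 1) * w = c ^ 2 * (1 - u) := by
    rw [hudef, htdef, hx_eq]; field_simp
  have harg_pos : 0 < c ^ 2 - (c ^ 2 - 1) * w := by
    rw [harg]; positivity
  have hν2 : ν ^ 2 = c ^ 2 * (1 - u) := by
    rw [hνdef, Real.sq_sqrt harg_pos.le]; exact harg
  have hνnn : 0 ≤ ν := by rw [hνdef]; exact Real.sqrt_nonneg _
  have hc2t : c ^ 2 * (1 - t) = 1 := by rw [htdef, hx_eq]; field_simp; ring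
  have hνsq_gt : 1 < ν ^ 2 := by nlinarith [hν2, hc2t, sq_nonneg c, hc0]
  have hν1 : 1 < ν := by nlinarith [hνsq_gt, hνnn, sq_nonneg (ν - 1), sq_nonneg (ν + 1)]
  have hν0 : 0 < ν := lt_trans one_pos hν1
  have hinv : 1 / ν ^ 2 = x / (1 - u) := by
    rw [hν2, hx_eq]; rw [one_div, mul_inv, ← one_div, ← one_div]
    field_simp
  -- artanh series for c
  have Hc1 : HasSum (fun m : ℕ => x ^ (m + 1) / (2 * (m : ℝ) + 3)) (c * _root_.artanh (1 / c) - 1) := by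
    have H := hasSum_shift (hasSum_mul_artanh hc)
    have h0 : (1 / c ^ 2 : ℝ) ^ (0 : ℕ) / (2 * ((0 : ℕ) : ℝ) + 1) = 1 := by norm_num
    rw [h0] at H
    refine H.congr_fun fun m => ?_
    rw [hx_eq]; push_cast; ring_nf
  -- artanh series for ν
  have Hν1 : HasSum (fun m : ℕ => (x / (1 - u)) ^ (m + 1) / (2 * (m : ℝ) + 3))
      (ν * _root_.artanh (1 / ν) - 1) := by
    have H := hasSum_shift (hasSum_mul_artanh hν1)
    have h0 : (1 / ν ^ 2 : ℝ) ^ (0 : ℕ) / (2 * ((0 : ℕ) : ℝ) + 1) = 1 := by norm_num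
    rw [h0] at H
    refine H.congr_fun fun m => ?_
    rw [hinv]; push_cast; ring_nf
  -- row sums
  have HSm : HasSum (fun m : ℕ => x ^ (m + 1) / (2 * (m : ℝ) + 3) * (1 / (1 - u) ^ (m + 1) - 1))
      (ν * _root_.artanh (1 / ν) - c * _root_.artanh (1 / c)) := by
    have H := Hν1.sub Hc1
    have hval : ν * _root_.artanh (1 / ν) - 1 - (c * _root_.artanh (1 / c) - 1)
        = ν * _root_.artanh (1 / ν) - c * _root_.artanh (1 / c) := by ring
    rw [hval] at H
    refine H.congr_fun fun m => ?_
    rw [div_pow]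
    have h2 : (0 : ℝ) < (1 - u) ^ (m + 1) := pow_pos h1u _
    field_simp
  -- each row as a sum over i
  have HS_m : ∀ m : ℕ, HasSum
      (fun i : ℕ => (Nat.choose (m + 1 + i) m : ℝ) * x ^ (m + 1) * u ^ (i + 1) / (2 * (m : ℝ) + 3))
      (x ^ (m + 1) / (2 * (m : ℝ) + 3) * (1 / (1 - u) ^ (m + 1) - 1)) := by
    intro m
    have hu' : ‖u‖ < 1 := by rw [Real.norm_eq_abs, abs_of_nonneg hu0]; exact hu1
    have H := hasSum_choose_mul_geometric_of_norm_lt_one m hu'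
    have H1 := hasSum_shift H
    have h0 : ((Nat.choose (0 + m) m : ℝ)) * u ^ (0 : ℕ) = 1 := by simp
    rw [h0] at H1
    have H2 := H1.mul_left (x ^ (m + 1) / (2 * (m : ℝ) + 3))
    refine H2.congr_fun fun i => ?_
    rw [show i + 1 + m = m + 1 + i from by omega]
    ring
  -- summability of row sums
  have hgeo : Summable (fun m : ℕ => (x / (1 - u)) ^ (m + 1)) := by
    have hr0 : 0 ≤ x / (1 - u) := div_nonneg hx0.le h1u.le
    have hr1 : x / (1 - u) < 1 := (div_lt_one h1u).2 hx1u
    exact (summable_nat_add_iff 1).2 (summable_geometric_of_lt_one hr0 hr1)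
  have hrow_nonneg : ∀ m : ℕ,
      0 ≤ x ^ (m + 1) / (2 * (m : ℝ) + 3) * (1 / (1 - u) ^ (m + 1) - 1) := by
    intro m
    have h2 : (0 : ℝ) < (1 - u) ^ (m + 1) := pow_pos h1u _
    have h3 : (1 - u) ^ (m + 1) ≤ 1 := pow_le_one₀ h1u.le (by linarith)
    have h4 : (1 : ℝ) ≤ 1 / (1 - u) ^ (m + 1) := by
      rw [le_div_iff₀ h2]; linarith
    have h5 : (0 : ℝ) ≤ x ^ (m + 1) / (2 * (m : ℝ) + 3) := by
      apply div_nonneg (pow_nonneg hx0.le _); positivity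
    nlinarith
  have hrow_le : ∀ m : ℕ,
      x ^ (m + 1) / (2 * (m : ℝ) + 3) * (1 / (1 - u) ^ (m + 1) - 1) ≤ (x / (1 - u)) ^ (m + 1) := by
    intro m
    have h2 : (0 : ℝ) < (1 - u) ^ (m + 1) := pow_pos h1u _
    have h5 : (0 : ℝ) ≤ x ^ (m + 1) := pow_nonneg hx0.le _
    have h3 : (1 - u) ^ (m + 1) ≤ 1 := pow_le_one₀ h1u.le (by linarith)
    have h7 : (0 : ℝ) ≤ 1 / (1 - u) ^ (m + 1) - 1 := by
      have : (1 : ℝ) ≤ 1 / (1 - u) ^ (m + 1) := by rw [le_div_iff₀ h2]; linarith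
      linarith
    have hm0 : (0 : ℝ) ≤ (m : ℝ) := Nat.cast_nonneg m
    have h6 : x ^ (m + 1) / (2 * (m : ℝ) + 3) ≤ x ^ (m + 1) :=
      div_le_self h5 (by linarith)
    have e : (x / (1 - u)) ^ (m + 1) = x ^ (m + 1) * (1 / (1 - u) ^ (m + 1)) := by
      rw [div_pow]; ring
    rw [e]
    calc x ^ (m + 1) / (2 * (m : ℝ) + 3) * (1 / (1 - u) ^ (m + 1) - 1)
        ≤ x ^ (m + 1) * (1 / (1 - u) ^ (m + 1) - 1) := mul_le_mul_of_nonneg_right h6 h7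
      _ ≤ x ^ (m + 1) * (1 / (1 - u) ^ (m + 1)) := by
          apply mul_le_mul_of_nonneg_left _ h5
          linarith
  have hSm_summable : Summable
      (fun m : ℕ => x ^ (m + 1) / (2 * (m : ℝ) + 3) * (1 / (1 - u) ^ (m + 1) - 1)) :=
    Summable.of_nonneg_of_le hrow_nonneg hrow_le hgeo
  -- the double family
  set G : ℕ × ℕ → ℝ := fun p =>
    (Nat.choose (p.1 + 1 + p.2) p.1 : ℝ) * x ^ (p.1 + 1) * u ^ (p.2 + 1) / (2 * (p.1 : ℝ) + 3)
    with hGdef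
  have hGnn : 0 ≤ G := by
    intro p
    apply div_nonneg _ (by positivity)
    apply mul_nonneg (mul_nonneg (by positivity) (pow_nonneg hx0.le _)) (pow_nonneg hu0 _)
  have hG : Summable G := by
    refine (summable_prod_of_nonneg hGnn).2 ⟨fun m => (HS_m m).summable, ?_⟩
    refine hSm_summable.congr fun m => ?_
    exact ((HS_m m).tsum_eq).symm
  have hcolrow : ∀ i : ℕ, Summable (fun m : ℕ => G (m, i)) := by
    intro i
    have hx' : ‖x‖ < 1 := by rw [Real.norm_eq_abs, abs_of_pos hx0]; exact hx1
    have H := (summable_choose_mul_geometric_of_norm_lt_one (i + 1) hx').mul_left (x * u ^ (i + 1))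
    refine Summable.of_nonneg_of_le (fun m => hGnn (m, i)) (fun m => ?_) H
    have hceq : ((Nat.choose (m + 1 + i) m : ℕ) : ℝ) = ((Nat.choose (m + (i + 1)) (i + 1) : ℕ) : ℝ) := by
      rw [show m + 1 + i = m + (i + 1) from by omega, Nat.choose_symm_add]
    have heq : x * u ^ (i + 1) * ((Nat.choose (m + (i + 1)) (i + 1) : ℝ) * x ^ m)
        = (Nat.choose (m + 1 + i) m : ℝ) * x ^ (m + 1) * u ^ (i + 1) := by
      rw [hceq]; ring
    rw [heq]
    show (Nat.choose (m + 1 + i) m : ℝ) * x ^ (m + 1) * u ^ (i + 1) / (2 * (m : ℝ) + 3)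
        ≤ (Nat.choose (m + 1 + i) m : ℝ) * x ^ (m + 1) * u ^ (i + 1)
    have hm0 : (0 : ℝ) ≤ (m : ℝ) := Nat.cast_nonneg m
    apply div_le_self _ (by linarith)
    apply mul_nonneg (mul_nonneg (by positivity) (pow_nonneg hx0.le _)) (pow_nonneg hu0 _)
  have hGswap : Summable (fun p : ℕ × ℕ => G p.swap) := hG.prod_symm
  have hcol : Summable (fun i : ℕ => ∑' m : ℕ, G (m, i)) := by
    have := (summable_prod_of_nonneg (f := fun p : ℕ × ℕ => G p.swap)
      (fun p => hGnn p.swap)).1 hGswap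
    exact this.2
  have hswap : ∑' (i : ℕ) (m : ℕ), G (m, i) = ∑' (m : ℕ) (i : ℕ), G (m, i) :=
    Summable.tsum_comm' hG (fun m => (HS_m m).summable) hcolrow
  have htsum_col : ∑' (i : ℕ) (m : ℕ), G (m, i) = ν * _root_.artanh (1 / ν) - c * _root_.artanh (1 / c) := by
    rw [hswap]
    rw [tsum_congr (fun m => (HS_m m).tsum_eq)]
    exact HSm.tsum_eq
  have Hhyp : HasSum (fun i : ℕ => (1 / 3 * x * t ^ (i + 1) * hyp2F1 (i + 1) x) * w ^ (i + 1))
      (ν * _root_.artanh (1 / ν) - c * _root_.artanh (1 / c)) := by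
    have H := hcol.hasSum
    rw [htsum_col] at H
    refine H.congr_fun fun i => ?_
    rw [hyp_eq_P i x t, ← tsum_mul_right]
    refine tsum_congr fun m => ?_
    show (Nat.choose (m + 1 + i) m : ℝ) * x ^ (m + 1) * t ^ (i + 1) / (2 * (m : ℝ) + 3) * w ^ (i + 1)
        = G (m, i)
    rw [hGdef]
    show _ = (Nat.choose (m + 1 + i) m : ℝ) * x ^ (m + 1) * u ^ (i + 1) / (2 * (m : ℝ) + 3)
    rw [hudef, mul_pow]
    ring
  -- log part
  have hw' : |w| < 1 := by rw [abs_of_nonneg hw0]; exact hw1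
  have Hlogsum := hasSum_pow_div_log_of_abs_lt_one hw'
  have Hlog := Hlogsum.mul_left (-(1 / 2))
  -- decomposition of h(ν)
  have hp1 : (0 : ℝ) < (ν + 1) / 2 := by linarith
  have hm1 : (0 : ℝ) < (ν - 1) / 2 := by linarith
  have hL : Real.log ((ν + 1) / 2) + Real.log ((ν - 1) / 2) = Real.log ((ν ^ 2 - 1) / 4) := by
    rw [← Real.log_mul (ne_of_gt hp1) (ne_of_gt hm1)]
    congr 1; ring
  have hA : _root_.artanh (1 / ν) = (Real.log ((ν + 1) / 2) - Real.log ((ν - 1) / 2)) / 2 := by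
    unfold _root_.artanh
    have hne : ν ≠ 0 := ne_of_gt hν0
    have hne1 : ν - 1 ≠ 0 := by linarith
    have hratio : (1 + 1 / ν) / (1 - 1 / ν) = ((ν + 1) / 2) / ((ν - 1) / 2) := by
      rw [div_eq_div_iff]
      · field_simp
      · have : 1 / ν < 1 := by rw [div_lt_one hν0]; exact hν1
        linarith
      · exact ne_of_gt hm1
    rw [hratio, Real.log_div (ne_of_gt hp1) (ne_of_gt hm1)]
  have hν2' : ν ^ 2 = c ^ 2 - (c ^ 2 - 1) * w := by rw [hν2, ← harg]
  have hν2m1 : ν ^ 2 - 1 = (c ^ 2 - 1) * (1 - w) := by linear_combination hν2'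
  have hc21 : (0 : ℝ) < c ^ 2 - 1 := by nlinarith
  have hlog2 : Real.log ((ν ^ 2 - 1) / 4)
      = Real.log ((c ^ 2 - 1) / 4) + Real.log (1 - w) := by
    rw [hν2m1, show (c ^ 2 - 1) * (1 - w) / 4 = ((c ^ 2 - 1) / 4) * (1 - w) from by ring,
      Real.log_mul (by positivity) (by linarith)]
  have hdecomp : ((ν + 1) / 2) * Real.log ((ν + 1) / 2) - ((ν - 1) / 2) * Real.log ((ν - 1) / 2)
      = 1 / 2 * Real.log ((c ^ 2 - 1) / 4) + 1 / 2 * Real.log (1 - w) + ν * _root_.artanh (1 / ν) := by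
    have hr : ((ν + 1) / 2) * Real.log ((ν + 1) / 2) - ((ν - 1) / 2) * Real.log ((ν - 1) / 2)
        = (1 / 2) * (Real.log ((ν + 1) / 2) + Real.log ((ν - 1) / 2))
          + ν * ((Real.log ((ν + 1) / 2) - Real.log ((ν - 1) / 2)) / 2) := by ring
    rw [hr, hL, hlog2, ← hA]
    ring
  -- combine
  have Hsum := Hhyp.add Hlog
  have hfun_eq : (fun i : ℕ => (1 / 3 * x * t ^ (i + 1) * hyp2F1 (i + 1) x) * w ^ (i + 1)
        + -(1 / 2) * (w ^ (i + 1) / ((i : ℝ) + 1)))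
      = fun i : ℕ => (1 / 3 * x * t ^ (i + 1) * hyp2F1 (i + 1) x - 1 / (2 * ((i : ℝ) + 1)))
          * w ^ (i + 1) := by
    funext i
    have hi : ((i : ℝ) + 1) ≠ 0 := by positivity
    field_simp
    ring
  rw [hfun_eq] at Hsum
  have hval : ν * _root_.artanh (1 / ν) - c * _root_.artanh (1 / c) + -(1 / 2) * -Real.log (1 - w)
      = (((ν + 1) / 2) * Real.log ((ν + 1) / 2) - ((ν - 1) / 2) * Real.log ((ν - 1) / 2))
        - (1 / 2 * Real.log ((c ^ 2 - 1) / 4) + c * _root_.artanh (1 / c)) := by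
    rw [hdecomp]; ring
  rw [hval] at Hsum
  refine ⟨Hsum, ?_⟩
  -- absolute summability
  have hD := (Hlogsum.mul_left (1 / 2)).summable
  refine Summable.of_nonneg_of_le (fun i => abs_nonneg _) (fun i => ?_) (Hhyp.summable.add hD)
  have hPnn : 0 ≤ 1 / 3 * x * t ^ (i + 1) * hyp2F1 (i + 1) x := by
    rw [hyp_eq_P]
    refine tsum_nonneg fun m => ?_
    apply div_nonneg _ (by positivity)
    apply mul_nonneg (mul_nonneg (by positivity) (pow_nonneg hx0.le _)) (pow_nonneg ht0.le _)
  have hwnn : 0 ≤ w ^ (i + 1) := pow_nonneg hw0 _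
  rw [abs_mul, abs_of_nonneg hwnn]
  have hdnn : (0 : ℝ) ≤ 1 / (2 * ((i : ℝ) + 1)) := by positivity
  have habs : |1 / 3 * x * t ^ (i + 1) * hyp2F1 (i + 1) x - 1 / (2 * ((i : ℝ) + 1))|
      ≤ 1 / 3 * x * t ^ (i + 1) * hyp2F1 (i + 1) x + 1 / (2 * ((i : ℝ) + 1)) := by
    calc |1 / 3 * x * t ^ (i + 1) * hyp2F1 (i + 1) x - 1 / (2 * ((i : ℝ) + 1))|
        ≤ |1 / 3 * x * t ^ (i + 1) * hyp2F1 (i + 1) x| + |1 / (2 * ((i : ℝ) + 1))| := abs_sub _ _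
      _ = 1 / 3 * x * t ^ (i + 1) * hyp2F1 (i + 1) x + 1 / (2 * ((i : ℝ) + 1)) := by
          rw [abs_of_nonneg hPnn, abs_of_nonneg hdnn]
  calc |1 / 3 * x * t ^ (i + 1) * hyp2F1 (i + 1) x - 1 / (2 * ((i : ℝ) + 1))| * w ^ (i + 1)
      ≤ (1 / 3 * x * t ^ (i + 1) * hyp2F1 (i + 1) x + 1 / (2 * ((i : ℝ) + 1))) * w ^ (i + 1) :=
        mul_le_mul_of_nonneg_right habs hwnn
    _ = (1 / 3 * x * t ^ (i + 1) * hyp2F1 (i + 1) x) * w ^ (i + 1)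
          + 1 / 2 * (w ^ (i + 1) / ((i : ℝ) + 1)) := by
        have hi : ((i : ℝ) + 1) ≠ 0 := by positivity
        field_simp

set_option maxHeartbeats 800000 in
/-- For `s ≠ 0`, `k ≥ 1` and `w_1,…,w_k ∈ [0,1)`, with
`ν_j = √(cosh²(2s) − sinh²(2s) w_j)` and
`h(ν) = ((ν+1)/2)·log((ν+1)/2) − ((ν−1)/2)·log((ν−1)/2)`:
`Σ_j h(ν_j) = k·[(1/2)·log(sinh²(2s)/4) + cosh(2s)·artanh(sech(2s))]
  + Σ_{i≥1} [(1/3)·sech²(2s)·tanh^{2i}(2s)·₂F₁(3/2,1+i;5/2;sech²(2s)) − 1/(2i)]·Σ_j w_j^i`,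
and the series converges absolutely. -/
theorem vonNeumann_entropy_series_expansion (s : ℝ) (hs : s ≠ 0) (k : ℕ) (hk : 1 ≤ k)
    (w : Fin k → ℝ) (hw : ∀ j, w j ∈ Set.Ico (0 : ℝ) 1) :
    Summable
      (fun i : ℕ =>
        |((1 / 3) * (1 / Real.cosh (2 * s)) ^ 2 * Real.tanh (2 * s) ^ (2 * (i + 1)) *
              hyp2F1 (i + 1) ((1 / Real.cosh (2 * s)) ^ 2) -
            1 / (2 * ((i : ℝ) + 1))) *
          ∑ j : Fin k, w j ^ (i + 1)|) ∧
      ∑ j : Fin k,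
          (((Real.sqrt (Real.cosh (2 * s) ^ 2 - Real.sinh (2 * s) ^ 2 * w j) + 1) / 2) *
              Real.log
                ((Real.sqrt (Real.cosh (2 * s) ^ 2 - Real.sinh (2 * s) ^ 2 * w j) + 1) / 2) -
            ((Real.sqrt (Real.cosh (2 * s) ^ 2 - Real.sinh (2 * s) ^ 2 * w j) - 1) / 2) *
              Real.log
                ((Real.sqrt (Real.cosh (2 * s) ^ 2 - Real.sinh (2 * s) ^ 2 * w j) - 1) / 2)) =
        (k : ℝ) *
            ((1 / 2) * Real.log (Real.sinh (2 * s) ^ 2 / 4) +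
              Real.cosh (2 * s) * _root_.artanh (1 / Real.cosh (2 * s))) +
          ∑' i : ℕ,
            ((1 / 3) * (1 / Real.cosh (2 * s)) ^ 2 * Real.tanh (2 * s) ^ (2 * (i + 1)) *
                  hyp2F1 (i + 1) ((1 / Real.cosh (2 * s)) ^ 2) -
                1 / (2 * ((i : ℝ) + 1))) *
              ∑ j : Fin k, w j ^ (i + 1) := by

  have h2s : (2 : ℝ) * s ≠ 0 := by
    intro h
    apply hs
    nlinarith [h]
  set c := Real.cosh (2 * s) with hcdef
  have hc : 1 < c := by rw [hcdef]; exact Real.one_lt_cosh.mpr h2s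
  have hc0 : (0 : ℝ) < c := lt_trans one_pos hc
  have hsinh : Real.sinh (2 * s) ^ 2 = c ^ 2 - 1 := by rw [hcdef]; exact Real.sinh_sq _
  have htanh : ∀ i : ℕ, Real.tanh (2 * s) ^ (2 * (i + 1)) = (1 - (1 / c) ^ 2) ^ (i + 1) := by
    intro i
    rw [pow_mul]
    congr 1
    rw [Real.tanh_eq_sinh_div_cosh, div_pow, hsinh, ← hcdef]
    field_simp
  rw [hsinh]
  simp only [htanh]
  have K : ∀ j : Fin k, _ := fun j : Fin k => key_hasSum hc (hw j).1 (hw j).2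
  have Htot := hasSum_sum (f := fun (j : Fin k) (i : ℕ) =>
      (1 / 3 * (1 / c) ^ 2 * (1 - (1 / c) ^ 2) ^ (i + 1) * hyp2F1 (i + 1) ((1 / c) ^ 2) -
        1 / (2 * ((i : ℝ) + 1))) * w j ^ (i + 1))
    (s := Finset.univ) (fun j _ => (K j).1)
  have H2 := Htot.congr_fun (fun i =>
    Finset.mul_sum Finset.univ (fun j : Fin k => w j ^ (i + 1))
      (1 / 3 * (1 / c) ^ 2 * (1 - (1 / c) ^ 2) ^ (i + 1) * hyp2F1 (i + 1) ((1 / c) ^ 2) -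
        1 / (2 * ((i : ℝ) + 1))))
  constructor
  · refine Summable.of_nonneg_of_le (fun i => abs_nonneg _) (fun i => ?_)
      (summable_sum (fun j (_ : j ∈ Finset.univ) => (K j).2))
    rw [Finset.mul_sum]
    exact Finset.abs_sum_le_sum_abs _ _
  · have hval := H2.tsum_eq
    rw [hval]
    simp only [Finset.sum_sub_distrib, Finset.sum_const, Finset.card_univ, Fintype.card_fin,
      nsmul_eq_mul]
    ring


end
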